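/- For every odd prime p and every integer l ≥ 1, the identity P_{2,p}(z)^{p^l − 1} · f_2|_p(z) = P_{1,p}(z)^{p(p^l − 1)/(p−1)} · f_2|_p(z^{p^l}) holds in 𝔽_p[[z]] (the exponent p(p^l − 1)/(p−1) equals p + p^2 + ⋯ + p^l). -/

import Mathlib

/-!
Write `g = f₁|_p` and `n = α + pβ` with `α < p`. Lucas' theorem gives
`C(2n,n) ≡ C(2α,α) C(2β,β) (mod p)`, i.e. `g = P₁ · g(z^p)`. Combined with
`(2n-1) a_n = -C(2n,n)²` it also gives `f₂|_p = P₂ · g(z^p)`: when `2α < p` the factor `2n-1 ≡ 2α-1`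
is a unit mod `p`, and when `2α ≥ p` both sides vanish because `p` divides `C(2α,α)`, hence
`C(2n,n)`, and `C(2m,m) ∣ a_m` for all `m`.
Iterating, `g(z^p) = P₁^{p+⋯+p^l} g(z^{p^{l+1}})`; since `P(z^{p^l}) = P^{p^l}` for polynomials
over `𝔽_p`, both sides of the identity equal `P₂^{p^l} P₁^{p+⋯+p^l} g(z^{p^{l+1}})`.
-/

/-- Substitution of `z^k` for `z` in a formal power series. -/
noncomputable def expandPS {R : Type*} [Semiring R] (k : ℕ) (f : PowerSeries R) :
    PowerSeries R :=
  PowerSeries.mk fun n => if k ∣ n then PowerSeries.coeff (n / k) f else 0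

open PowerSeries Finset

section Semiring

variable {R : Type*} [Semiring R] {k : ℕ}

theorem sum_range_C_mul_X_pow_eq_trunc (c : ℕ → R) :
    ∑ n ∈ range k, Polynomial.C (c n) * Polynomial.X ^ n = trunc k (mk c) := by
  ext i
  simp [coeff_trunc]

theorem mk_eq_trunc_mul_expandPS (hk : 0 < k) (c d : ℕ → R)
    (h : ∀ α β, α < k → c (α + k * β) = c α * d β) :
    mk c = (trunc k (mk c) : PowerSeries R) * expandPS k (mk d) := by
  ext n
  obtain ⟨α, β, hα, rfl⟩ : ∃ α β, α < k ∧ n = α + k * β :=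
    ⟨n % k, n / k, Nat.mod_lt n hk, (Nat.mod_add_div n k).symm⟩
  have hmem : (α, k * β) ∈ antidiagonal (α + k * β) := HasAntidiagonal.mem_antidiagonal.mpr rfl
  rw [coeff_mul, sum_eq_single_of_mem _ hmem, coeff_mk, h α β hα]
  · simp [coeff_trunc, hα, expandPS, Nat.mul_div_cancel_left β hk]
  rintro ⟨i, j⟩ hij hne
  simp only [HasAntidiagonal.mem_antidiagonal] at hij
  simp only [Polynomial.coeff_coe, coeff_trunc, expandPS, coeff_mk]
  by_cases hi : i < k
  · by_cases hj : k ∣ j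
    · obtain ⟨γ, rfl⟩ := hj
      have hiα : i = α := by
        simpa [Nat.add_mul_mod_self_left, Nat.mod_eq_of_lt hi, Nat.mod_eq_of_lt hα] using
          congrArg (· % k) hij
      subst hiα
      exact absurd (by rw [Nat.eq_of_mul_eq_mul_left hk (Nat.add_left_cancel hij)]) hne
    · rw [if_neg hj, mul_zero]
  · rw [if_neg hi, zero_mul]

end Semiring

section CommRing

variable {R : Type*} [CommRing R] {k m : ℕ}

theorem expandPS_eq_expand (hk : k ≠ 0) (f : PowerSeries R) : expandPS k f = expand k hk f := by
  ext n
  rw [coeff_expand, expandPS, coeff_mk]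

theorem expandPS_mul (hk : k ≠ 0) (f g : PowerSeries R) :
    expandPS k (f * g) = expandPS k f * expandPS k g := by
  simp only [expandPS_eq_expand hk, map_mul]

theorem expandPS_expandPS (hk : k ≠ 0) (hm : m ≠ 0) (f : PowerSeries R) :
    expandPS k (expandPS m f) = expandPS (k * m) f := by
  rw [expandPS_eq_expand hk, expandPS_eq_expand hm, expandPS_eq_expand (mul_ne_zero hk hm),
    expand_mul]

theorem expandPS_coe (hk : k ≠ 0) (P : Polynomial R) :
    expandPS k (P : PowerSeries R) = (Polynomial.expand R k P : PowerSeries R) := by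
  ext n
  simp only [expandPS_eq_expand hk, coeff_expand, Polynomial.coeff_coe,
    Polynomial.coeff_expand (Nat.pos_of_ne_zero hk)]

end CommRing

section Frobenius

variable {p : ℕ} [hp : Fact p.Prime]

theorem ZMod.expand_prime_pow (l : ℕ) (P : Polynomial (ZMod p)) :
    Polynomial.expand (ZMod p) (p ^ l) P = P ^ p ^ l := by
  have hid : iterateFrobenius (ZMod p) p l = RingHom.id _ := by
    ext x
    simp [iterateFrobenius_def, ZMod.pow_card_pow]
  simpa [hid] using Polynomial.map_iterateFrobenius_expand p P l

theorem expandPS_prime_pow_coe (l : ℕ) (P : Polynomial (ZMod p)) :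
    expandPS (p ^ l) (P : PowerSeries (ZMod p)) = (P : PowerSeries (ZMod p)) ^ p ^ l := by
  rw [expandPS_coe (pow_ne_zero l hp.out.ne_zero), ZMod.expand_prime_pow, Polynomial.coe_pow]

theorem expandPS_eq_pow_mul_expandPS {P : Polynomial (ZMod p)} {g : PowerSeries (ZMod p)}
    (hg : g = P * expandPS p g) (l : ℕ) :
    expandPS p g = (P : PowerSeries (ZMod p)) ^ (∑ i ∈ range l, p ^ (i + 1)) *
      expandPS (p ^ (l + 1)) g := by
  have hp0 := hp.out.ne_zero
  induction l with
  | zero => simp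
  | succ l ih =>
    have hstep : expandPS (p ^ (l + 1)) g =
        (P : PowerSeries (ZMod p)) ^ p ^ (l + 1) * expandPS (p ^ (l + 2)) g := by
      conv_lhs => rw [hg]
      rw [expandPS_mul (pow_ne_zero _ hp0), expandPS_prime_pow_coe,
        expandPS_expandPS (pow_ne_zero _ hp0) hp0, ← pow_succ]
    rw [ih, hstep, sum_range_succ, pow_add]
    ring

end Frobenius

theorem Nat.mul_pow_sub_one_div_eq_sum_range {p : ℕ} (hp : 2 ≤ p) (l : ℕ) :
    p * (p ^ l - 1) / (p - 1) = ∑ i ∈ range l, p ^ (i + 1) := by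
  simp only [pow_succ', ← mul_sum, Nat.geomSum_eq hp,
    Nat.mul_div_assoc _ (Nat.sub_one_dvd_pow_sub_one p l)]

theorem cast_choose_two_mul_add_mul {p : ℕ} [hp : Fact p.Prime] {α : ℕ} (hα : α < p) (β : ℕ) :
    ((2 * (α + p * β)).choose (α + p * β) : ZMod p) = (2 * α).choose α * (2 * β).choose β := by
  have hp0 := hp.out.pos
  rw [(ZMod.natCast_eq_natCast_iff _ _ p).mpr Choose.choose_modEq_choose_mod_mul_choose_div_nat,
    Nat.cast_mul, Nat.add_mul_mod_self_left, Nat.mod_eq_of_lt hα, Nat.add_mul_div_left _ _ hp0,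
    Nat.div_eq_of_lt hα, zero_add, show 2 * (α + p * β) = 2 * α + p * (2 * β) by ring,
    Nat.add_mul_mod_self_left, Nat.add_mul_div_left _ _ hp0]
  rcases lt_or_ge (2 * α) p with hsmall | hlarge
  · rw [Nat.mod_eq_of_lt hsmall, Nat.div_eq_of_lt hsmall, zero_add]
  · have hdvd : p ∣ (2 * α).choose α := two_mul α ▸ hp.out.dvd_choose_add hα hα (by omega)
    rw [Nat.mod_eq_sub_mod hlarge, Nat.mod_eq_of_lt (by omega),
      Nat.choose_eq_zero_of_lt (by omega), (ZMod.natCast_eq_zero_iff _ p).mpr hdvd]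
    simp

theorem two_mul_sub_one_dvd_choose (n : ℕ) : (2 * n - 1 : ℤ) ∣ (2 * n).choose n := by
  rcases n with _ | m
  · simp
  · refine ⟨2 * catalan m, ?_⟩
    have h : (m + 1).centralBinom = 2 * (2 * m + 1) * catalan m := by
      apply Nat.eq_of_mul_eq_mul_left m.succ_pos
      rw [Nat.succ_mul_centralBinom_succ, ← succ_mul_catalan_eq_centralBinom m, mul_left_comm]
    rw [← Nat.centralBinom_eq_two_mul_choose, h]
    push_cast
    ring

section NegChooseSqDiv

variable {a : ℕ → ℤ}
  (ha : ∀ n : ℕ, (a n : ℚ) = ((-1 : ℚ) / (2 * (n : ℚ) - 1)) * (Nat.choose (2 * n) n : ℚ) ^ 2)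
include ha

theorem two_mul_sub_one_mul_eq_neg_choose_sq (n : ℕ) :
    (2 * n - 1 : ℤ) * a n = -((2 * n).choose n) ^ 2 := by
  have hne : (2 * n - 1 : ℚ) ≠ 0 := by
    have : (2 * n - 1 : ℚ) = ((2 * n - 1 : ℤ) : ℚ) := by push_cast; ring
    rw [this]
    exact_mod_cast (by omega : (2 * n - 1 : ℤ) ≠ 0)
  have h : (2 * n - 1 : ℚ) * a n = -((2 * n).choose n) ^ 2 := by
    rw [ha n]
    field_simp
  exact_mod_cast h

theorem choose_dvd_of_eq_neg_choose_sq_div (n : ℕ) : ((2 * n).choose n : ℤ) ∣ a n := by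
  obtain ⟨q, hq⟩ := two_mul_sub_one_dvd_choose n
  refine ⟨-q, mul_left_cancel₀ (by omega : (2 * n - 1 : ℤ) ≠ 0) ?_⟩
  rw [two_mul_sub_one_mul_eq_neg_choose_sq ha, hq]
  ring

theorem cast_apply_add_mul_eq_mul_choose_sq {p : ℕ} [hp : Fact p.Prime] {α : ℕ} (hα : α < p)
    (β : ℕ) : (a (α + p * β) : ZMod p) = a α * ((2 * β).choose β) ^ 2 := by
  have hlucas := cast_choose_two_mul_add_mul hα β
  rcases lt_or_ge (2 * α) p with hsmall | hlarge
  · have hunit : (2 * α - 1 : ZMod p) ≠ 0 := by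
      intro h0
      have h : ((2 * α : ℕ) : ZMod p) = ((1 : ℕ) : ZMod p) := by
        push_cast
        exact sub_eq_zero.mp h0
      rw [ZMod.natCast_eq_natCast_iff', Nat.mod_eq_of_lt hsmall,
        Nat.mod_eq_of_lt hp.out.one_lt] at h
      omega
    have hcast (m : ℕ) : (2 * m - 1 : ZMod p) * a m = -((2 * m).choose m) ^ 2 := by
      exact_mod_cast congrArg (Int.cast : ℤ → ZMod p) (two_mul_sub_one_mul_eq_neg_choose_sq ha m)
    refine mul_left_cancel₀ hunit ?_
    have hn := hcast (α + p * β)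
    push_cast [ZMod.natCast_self] at hn
    rw [zero_mul, add_zero] at hn
    rw [hn, hlucas, ← mul_assoc, hcast α]
    ring
  · have hzero : ((2 * α).choose α : ZMod p) = 0 :=
      (ZMod.natCast_eq_zero_iff _ p).mpr (two_mul α ▸ hp.out.dvd_choose_add hα hα (by omega))
    have hcast_eq_zero {m : ℕ} (hm : ((2 * m).choose m : ZMod p) = 0) : (a m : ZMod p) = 0 := by
      obtain ⟨q, hq⟩ := choose_dvd_of_eq_neg_choose_sq_div ha m
      rw [hq]
      push_cast
      rw [hm, zero_mul]
    rw [hcast_eq_zero hzero, hcast_eq_zero (by rw [hlucas, hzero, zero_mul]), zero_mul]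

end NegChooseSqDiv

theorem stmt14_general (p : ℕ) (hp : p.Prime) (l : ℕ)
    (a : ℕ → ℤ)
    (ha : ∀ n : ℕ, (a n : ℚ) =
      ((-1 : ℚ) / (2 * (n : ℚ) - 1)) * (Nat.choose (2 * n) n : ℚ) ^ 2)
    (f₂p : PowerSeries (ZMod p)) (P₁p P₂p : Polynomial (ZMod p))
    (hf₂p : f₂p = PowerSeries.mk fun n => ((a n : ZMod p)))
    (hP₁p : P₁p = ∑ n ∈ Finset.range p,
      Polynomial.C (((Nat.choose (2 * n) n : ZMod p)) ^ 2) * Polynomial.X ^ n)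
    (hP₂p : P₂p = ∑ n ∈ Finset.range p, Polynomial.C ((a n : ZMod p)) * Polynomial.X ^ n) :
    (P₂p : PowerSeries (ZMod p)) ^ (p ^ l - 1) * f₂p =
      (P₁p : PowerSeries (ZMod p)) ^ (p * (p ^ l - 1) / (p - 1)) * expandPS (p ^ l) f₂p := by
  have : Fact p.Prime := ⟨hp⟩
  set f₁p : PowerSeries (ZMod p) := mk fun n => ((2 * n).choose n : ZMod p) ^ 2
  have hf₁ : f₁p = P₁p * expandPS p f₁p := by
    rw [hP₁p, sum_range_C_mul_X_pow_eq_trunc]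
    refine mk_eq_trunc_mul_expandPS hp.pos _ _ fun α β hα => ?_
    rw [cast_choose_two_mul_add_mul hα, mul_pow]
  have hf₂ : f₂p = P₂p * expandPS p f₁p := by
    rw [hP₂p, sum_range_C_mul_X_pow_eq_trunc, hf₂p]
    exact mk_eq_trunc_mul_expandPS hp.pos _ _ fun α β hα =>
      cast_apply_add_mul_eq_mul_choose_sq ha hα β
  calc (P₂p : PowerSeries (ZMod p)) ^ (p ^ l - 1) * f₂p
      = (P₂p : PowerSeries (ZMod p)) ^ p ^ l * expandPS p f₁p := by
        rw [hf₂, ← mul_assoc, ← pow_succ, Nat.sub_add_cancel (Nat.one_le_pow _ _ hp.pos)]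
    _ = (P₂p : PowerSeries (ZMod p)) ^ p ^ l *
          ((P₁p : PowerSeries (ZMod p)) ^ (p * (p ^ l - 1) / (p - 1)) *
            expandPS (p ^ (l + 1)) f₁p) := by
        rw [expandPS_eq_pow_mul_expandPS hf₁ l, Nat.mul_pow_sub_one_div_eq_sum_range hp.two_le]
    _ = (P₁p : PowerSeries (ZMod p)) ^ (p * (p ^ l - 1) / (p - 1)) * expandPS (p ^ l) f₂p := by
        rw [hf₂, expandPS_mul (pow_ne_zero l hp.ne_zero), expandPS_prime_pow_coe,
          expandPS_expandPS (pow_ne_zero l hp.ne_zero) hp.ne_zero, ← pow_succ]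
        ring

/-- For every odd prime `p` and every `l ≥ 1`,
`P_{2,p}(z)^{p^l−1} f₂|_p(z) = P_{1,p}(z)^{p(p^l−1)/(p−1)} f₂|_p(z^{p^l})` in `𝔽_p[[z]]`. -/
theorem stmt14 (p : ℕ) (hp : p.Prime) (hodd : Odd p) (l : ℕ) (hl : 1 ≤ l)
    (a : ℕ → ℤ)
    (ha : ∀ n : ℕ, (a n : ℚ) =
      ((-1 : ℚ) / (2 * (n : ℚ) - 1)) * (Nat.choose (2 * n) n : ℚ) ^ 2)
    (f₂p : PowerSeries (ZMod p)) (P₁p P₂p : Polynomial (ZMod p))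
    (hf₂p : f₂p = PowerSeries.mk fun n => ((a n : ZMod p)))
    (hP₁p : P₁p = ∑ n ∈ Finset.range p,
      Polynomial.C (((Nat.choose (2 * n) n : ZMod p)) ^ 2) * Polynomial.X ^ n)
    (hP₂p : P₂p = ∑ n ∈ Finset.range p, Polynomial.C ((a n : ZMod p)) * Polynomial.X ^ n) :
    (P₂p : PowerSeries (ZMod p)) ^ (p ^ l - 1) * f₂p =
      (P₁p : PowerSeries (ZMod p)) ^ (p * (p ^ l - 1) / (p - 1)) * expandPS (p ^ l) f₂p :=
  stmt14_general p hp l a ha f₂p P₁p P₂p hf₂p hP₁p hP₂p
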